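/- (SWU upper bound and downward closure.) Let D be a finite database of q-sequences and let t, t' be sequences with t' a subsequence of t (t' ⊴ t). Then u(t) ≤ SWU(t) ≤ SWU(t'), where u(t) = Σ_{s∈D, t⊑s} u(t,s) and SWU(t) = Σ_{s∈D, t⊑s} u(s). -/

import Mathlib

open scoped Classical

namespace TKUS

variable {I : Type*} [Fintype I] [LinearOrder I]

/-- `p` is the (0-based) position list of an instance of the sequence `t`
in the q-sequence `s`. -/
def IsInstance (s : List (I →₀ ℕ)) (t : List (Finset I)) (p : List ℕ) : Prop :=
  p.length = t.length ∧ p.Chain' (· < ·) ∧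
    ∀ v < t.length, p.getD v 0 < s.length ∧
      ∀ i ∈ t.getD v ∅, 0 < s.getD (p.getD v 0) 0 i

/-- `t ⊑ s` : `t` has at least one instance in `s`. -/
def Contains (s : List (I →₀ ℕ)) (t : List (Finset I)) : Prop :=
  ∃ p, IsInstance s t p

/-- `u(t,p,s)` : utility of `t` at position `p` in `s`. -/
def uPos (eu : I → ℝ) (s : List (I →₀ ℕ)) (t : List (Finset I)) (p : List ℕ) : ℝ :=
  ∑ v ∈ Finset.range t.length, ∑ i ∈ t.getD v ∅,
    (s.getD (p.getD v 0) 0 i : ℝ) * eu i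

/-- `u(t,s)` : the maximum utility over all instances of `t` in `s` (`0` if none). -/
noncomputable def uSeq (eu : I → ℝ) (s : List (I →₀ ℕ)) (t : List (Finset I)) : ℝ :=
  sSup {x | ∃ p, IsInstance s t p ∧ x = uPos eu s t p}

/-- the greatest item of the last itemset of `t`, as an element of `WithBot I`. -/
def iLast (t : List (Finset I)) : WithBot I :=
  (t.getLast?.getD ∅).max

/-- `u_rest(t,k,s)` : remaining utility of `t` at extension position `k` in `s`. -/
def uRest (eu : I → ℝ) (s : List (I →₀ ℕ)) (t : List (Finset I)) (k : ℕ) : ℝ :=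
  ∑ j ∈ Finset.range s.length, ∑ i ∈ (s.getD j 0).support,
    if k < j ∨ (j = k ∧ iLast t < (i : WithBot I)) then (s.getD j 0 i : ℝ) * eu i else 0

/-- `k` is an extension position of `t` in `s`. -/
def ExtPos (s : List (I →₀ ℕ)) (t : List (Finset I)) (k : ℕ) : Prop :=
  ∃ p, IsInstance s t p ∧ p.getLast?.getD 0 = k

/-- the pivot : the least extension position of `t` in `s`. -/
noncomputable def pivot (s : List (I →₀ ℕ)) (t : List (Finset I)) : ℕ :=
  sInf {k | ExtPos s t k}

/-- `u_rest(t,s)` : remaining utility of `t` at the pivot. -/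
noncomputable def uRestSeq (eu : I → ℝ) (s : List (I →₀ ℕ)) (t : List (Finset I)) : ℝ :=
  uRest eu s t (pivot s t)

/-- `PEU(t,p,s)`. -/
noncomputable def PEUpos (eu : I → ℝ) (s : List (I →₀ ℕ)) (t : List (Finset I))
    (p : List ℕ) : ℝ :=
  if 0 < uRest eu s t (p.getLast?.getD 0) then
    uPos eu s t p + uRest eu s t (p.getLast?.getD 0)
  else 0

/-- `PEU(t,s)` : maximum of `PEU(t,p,s)` over all instances. -/
noncomputable def PEUseq (eu : I → ℝ) (s : List (I →₀ ℕ)) (t : List (Finset I)) : ℝ :=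
  sSup {x | ∃ p, IsInstance s t p ∧ x = PEUpos eu s t p}

/-- `t'` is an extension-prefix of `t` : `t' = ⟨X₁,…,X_{r−1}, X'_r⟩` where
`X'_r` is a nonempty lower segment of `X_r`. -/
def ExtPrefix (t' t : List (Finset I)) : Prop :=
  t' ≠ [] ∧ t'.length ≤ t.length ∧
    (∀ v, v + 1 < t'.length → t'.getD v ∅ = t.getD v ∅) ∧
    (t'.getD (t'.length - 1) ∅).Nonempty ∧
    t'.getD (t'.length - 1) ∅ ⊆ t.getD (t'.length - 1) ∅ ∧
    ∀ a ∈ t.getD (t'.length - 1) ∅ \ t'.getD (t'.length - 1) ∅,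
      ∀ b ∈ t'.getD (t'.length - 1) ∅, b < a

/-- `t'` is a proper extension-prefix of `t`. -/
def ProperExtPrefix (t' t : List (Finset I)) : Prop :=
  ExtPrefix t' t ∧ t' ≠ t

/-- the length (total number of item occurrences) of a sequence. -/
def seqLen (t : List (Finset I)) : ℕ :=
  (t.map Finset.card).sum

/-- remove the greatest item from a finite itemset. -/
def delMax (X : Finset I) : Finset I :=
  X.filter fun i => (i : WithBot I) ≠ X.max

/-- the parent of a sequence: delete the greatest item of the last itemset
(dropping that itemset entirely if it becomes empty). -/
def parent (t : List (Finset I)) : List (Finset I) :=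
  match t.getLast? with
  | none => []
  | some X => if delMax X = ∅ then t.dropLast else t.dropLast ++ [delMax X]

/-- `u(s)` : utility of a whole q-sequence. -/
def uQ (eu : I → ℝ) (s : List (I →₀ ℕ)) : ℝ :=
  ∑ j ∈ Finset.range s.length, ∑ i ∈ (s.getD j 0).support,
    (s.getD j 0 i : ℝ) * eu i

/-- `u(t)` : utility of `t` in a database `D`. -/
noncomputable def uDB (eu : I → ℝ) (D : Multiset (List (I →₀ ℕ)))
    (t : List (Finset I)) : ℝ :=
  (D.map fun s => if Contains s t then uSeq eu s t else 0).sum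

/-- `PEU(t)` over a database. -/
noncomputable def PEUDB (eu : I → ℝ) (D : Multiset (List (I →₀ ℕ)))
    (t : List (Finset I)) : ℝ :=
  (D.map fun s => if Contains s t then PEUseq eu s t else 0).sum

/-- `RSU(t,s)`. -/
noncomputable def RSUseq (eu : I → ℝ) (s : List (I →₀ ℕ)) (t : List (Finset I)) : ℝ :=
  if Contains s t then PEUseq eu s (parent t) else 0

/-- `RSU(t)` over a database. -/
noncomputable def RSUDB (eu : I → ℝ) (D : Multiset (List (I →₀ ℕ)))
    (t : List (Finset I)) : ℝ :=
  (D.map fun s => RSUseq eu s t).sum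

/-- `SWU(t)` over a database. -/
noncomputable def SWUDB (eu : I → ℝ) (D : Multiset (List (I →₀ ℕ)))
    (t : List (Finset I)) : ℝ :=
  (D.map fun s => if Contains s t then uQ eu s else 0).sum

/-- `SEU(t)` over a database. -/
noncomputable def SEUDB (eu : I → ℝ) (D : Multiset (List (I →₀ ℕ)))
    (t : List (Finset I)) : ℝ :=
  (D.map fun s => if Contains s t then uSeq eu s t + uRestSeq eu s t else 0).sum

/-- `t' ⊴ t` : `t'` is a subsequence of `t`. -/
def Subseq (t' t : List (Finset I)) : Prop :=
  ∃ p : List ℕ, p.length = t'.length ∧ p.Chain' (· < ·) ∧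
    ∀ v < t'.length, p.getD v 0 < t.length ∧ t'.getD v ∅ ⊆ t.getD (p.getD v 0) ∅

/-- `t` is a top-k HUSP with respect to the candidate set `C`. -/
def IsTopK (eu : I → ℝ) (D : Multiset (List (I →₀ ℕ))) (k : ℕ)
    (C : Finset (List (Finset I))) (t : List (Finset I)) : Prop :=
  t ∈ C ∧ (C.filter fun r => uDB eu D t < uDB eu D r).card < k

lemma chain'_lt_getD {p : List ℕ} (hp : p.Chain' (· < ·)) {a b : ℕ}
    (hab : a < b) (hb : b < p.length) : p.getD a 0 < p.getD b 0 := by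
  rw [List.getD_eq_getElem p 0 (lt_trans hab hb), List.getD_eq_getElem p 0 hb]
  exact List.pairwise_iff_getElem.mp (List.isChain_iff_pairwise.mp hp) a b
    (lt_trans hab hb) hb hab

lemma uQ_nonneg (eu : I → ℝ) (heu : ∀ i, 0 < eu i) (s : List (I →₀ ℕ)) :
    0 ≤ uQ eu s := by
  apply Finset.sum_nonneg
  intro j _
  apply Finset.sum_nonneg
  intro i _
  exact mul_nonneg (Nat.cast_nonneg _) (heu i).le

lemma uPos_le_uQ (eu : I → ℝ) (heu : ∀ i, 0 < eu i) (s : List (I →₀ ℕ))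
    (t : List (Finset I)) (p : List ℕ) (hins : IsInstance s t p) :
    uPos eu s t p ≤ uQ eu s := by
  obtain ⟨hlen, hchain, hcond⟩ := hins
  set F : ℕ → ℝ := fun j => ∑ i ∈ (s.getD j 0).support, (s.getD j 0 i : ℝ) * eu i with hF
  have hFnn : ∀ j, 0 ≤ F j := by
    intro j
    apply Finset.sum_nonneg
    intro i _
    exact mul_nonneg (Nat.cast_nonneg _) (heu i).le
  have h1 : uPos eu s t p ≤ ∑ v ∈ Finset.range t.length, F (p.getD v 0) := by
    apply Finset.sum_le_sum
    intro v hv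
    rw [Finset.mem_range] at hv
    apply Finset.sum_le_sum_of_subset_of_nonneg
    · intro i hi
      exact Finsupp.mem_support_iff.mpr ((hcond v hv).2 i hi).ne'
    · intro i _ _
      exact mul_nonneg (Nat.cast_nonneg _) (heu i).le
  have h2 : ∑ v ∈ Finset.range t.length, F (p.getD v 0)
      = ∑ j ∈ (Finset.range t.length).image (fun v => p.getD v 0), F j := by
    rw [Finset.sum_image]
    intro a ha b hb hab
    rw [Finset.mem_coe, Finset.mem_range] at ha hb
    rcases lt_trichotomy a b with h | h | h
    · exact absurd hab (ne_of_lt (chain'_lt_getD hchain h (hlen ▸ hb)))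
    · exact h
    · exact absurd hab.symm (ne_of_lt (chain'_lt_getD hchain h (hlen ▸ ha)))
  have h3 : ∑ j ∈ (Finset.range t.length).image (fun v => p.getD v 0), F j
      ≤ ∑ j ∈ Finset.range s.length, F j := by
    apply Finset.sum_le_sum_of_subset_of_nonneg
    · intro j hj
      rw [Finset.mem_image] at hj
      obtain ⟨v, hv, rfl⟩ := hj
      rw [Finset.mem_range] at hv ⊢
      exact (hcond v hv).1
    · intro j _ _; exact hFnn j
  calc uPos eu s t p ≤ _ := h1
    _ = _ := h2
    _ ≤ _ := h3
    _ = uQ eu s := rfl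

lemma uSeq_le_uQ (eu : I → ℝ) (heu : ∀ i, 0 < eu i) (s : List (I →₀ ℕ))
    (t : List (Finset I)) : uSeq eu s t ≤ uQ eu s := by
  apply Real.sSup_le
  · rintro x ⟨p, hins, rfl⟩
    exact uPos_le_uQ eu heu s t p hins
  · exact uQ_nonneg eu heu s

lemma contains_of_subseq {s : List (I →₀ ℕ)} {t t' : List (Finset I)}
    (hsub : Subseq t' t) (h : Contains s t) : Contains s t' := by
  obtain ⟨q, hqlen, hqchain, hq⟩ := hsub
  obtain ⟨p, hplen, hpchain, hp⟩ := h
  refine ⟨(List.range t'.length).map (fun v => p.getD (q.getD v 0) 0), ?_, ?_, ?_⟩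
  · simp
  · refine List.isChain_iff_pairwise.mpr ?_
    rw [List.pairwise_iff_getElem]
    intro a b ha hb hab
    simp only [List.length_map, List.length_range] at ha hb
    simp only [List.getElem_map, List.getElem_range]
    have hqb := hq b hb
    have hqa : q.getD a 0 < q.getD b 0 := chain'_lt_getD hqchain hab (hqlen ▸ hb)
    exact chain'_lt_getD hpchain hqa (hplen ▸ hqb.1)
  · intro v hv
    have hget : ((List.range t'.length).map (fun v => p.getD (q.getD v 0) 0)).getD v 0
        = p.getD (q.getD v 0) 0 := by
      rw [List.getD_eq_getElem _ 0 (by simpa using hv)]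
      simp
    rw [hget]
    have hqv := hq v hv
    have hpv := hp (q.getD v 0) hqv.1
    exact ⟨hpv.1, fun i hi => hpv.2 i (hqv.2 hi)⟩

/-- SWU upper bound and downward closure: for `t' ⊴ t`,
`u(t) ≤ SWU(t) ≤ SWU(t')`. -/
theorem uDB_le_SWUDB_le_SWUDB
    (eu : I → ℝ) (heu : ∀ i, 0 < eu i)
    (D : Multiset (List (I →₀ ℕ)))
    (t t' : List (Finset I))
    (ht : ∀ X ∈ t, X.Nonempty) (ht' : ∀ X ∈ t', X.Nonempty)
    (hsub : Subseq t' t) :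
    uDB eu D t ≤ SWUDB eu D t ∧ SWUDB eu D t ≤ SWUDB eu D t' := by
  constructor
  · apply Multiset.sum_map_le_sum_map
    intro s _
    by_cases h : Contains s t
    · simp only [if_pos h]
      exact uSeq_le_uQ eu heu s t
    · simp [h]
  · apply Multiset.sum_map_le_sum_map
    intro s _
    by_cases h : Contains s t
    · rw [if_pos h, if_pos (contains_of_subseq hsub h)]
    · simp only [if_neg h]
      by_cases h' : Contains s t'
      · simp only [if_pos h']
        exact uQ_nonneg eu heu s
      · simp [h']

end TKUS
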